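/- (NML achieves constant regret and uniquely minimizes worst-case regret) Let {P_θ : θ ∈ Θ} be a family of distributions on a finite set X^n such that for each x there is a maximizer θ̂(x) of θ ↦ P_θ(x), and suppose C := ∑_{x} P_{θ̂(x)}(x) is finite and positive. Define P_nml(x) = P_{θ̂(x)}(x) / C. Then: (1) for every x, - log₂ P_nml(x) + log₂ P_{θ̂(x)}(x) = log₂ C; (2) for every probability distribution Q ≠ P_nml on X^n, max_x [ - log₂ Q(x) + log₂ P_{θ̂(x)}(x) ] > log₂ C. Hence P_nml is the unique minimizer of the worst-case regret. -/

import Mathlib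

open Finset Real

/-! A probability vector `Q ≠ P_nml` has the same total mass as `P_nml`, so `Q z < P_nml z`
for some `z`, i.e. `C < P_{θ̂(z)}(z) / Q z`; the `log₂` of the right-hand side is the regret of
`Q` at `z`. -/

theorem Fintype.exists_lt_of_sum_eq_of_ne {ι M : Type*} [Fintype ι] [AddCommMonoid M]
    [LinearOrder M] [IsOrderedCancelAddMonoid M] {f g : ι → M}
    (hsum : ∑ i, f i = ∑ i, g i) (hne : f ≠ g) : ∃ i, f i < g i := by
  by_contra! hle
  exact hne <| funext fun i =>
    ((sum_eq_sum_iff_of_le fun j _ => hle j).mp hsum.symm i (mem_univ i)).symm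

theorem Real.neg_logb_div_add_logb {b p C : ℝ} (hp : p ≠ 0) (hC : C ≠ 0) :
    -logb b (p / C) + logb b p = logb b C := by
  rw [logb_div hp hC]
  ring

theorem Real.logb_lt_neg_logb_add_logb_of_lt_div {b q p C : ℝ} (hb : 1 < b) (hq : 0 < q)
    (hC : 0 < C) (hlt : q < p / C) : logb b C < -logb b q + logb b p := by
  have hCq : C * q < p := by rwa [lt_div_iff₀ hC, mul_comm] at hlt
  have hp : 0 < p := (mul_pos hC hq).trans hCq
  calc logb b C < logb b (p / q) := logb_lt_logb hb hC ((lt_div_iff₀ hq).mpr hCq)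
    _ = -logb b q + logb b p := by rw [logb_div hp.ne' hq.ne']; ring

theorem nml_minimax_regret_general (Θ : Type*) (X : Type*) [Fintype X] [Nonempty X]
    (P : Θ → X → ℝ) (θhat : X → Θ)
    (hpos : ∀ x : X, 0 < P (θhat x) x) :
    (∀ x : X,
      -Real.logb 2 (P (θhat x) x / ∑ y, P (θhat y) y) + Real.logb 2 (P (θhat x) x)
        = Real.logb 2 (∑ y, P (θhat y) y)) ∧
    (∀ Q : X → ℝ, (∀ x, 0 < Q x) → (∑ x, Q x = 1) →
      Q ≠ (fun x => P (θhat x) x / ∑ y, P (θhat y) y) →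
      Real.logb 2 (∑ y, P (θhat y) y) <
        Finset.univ.sup' Finset.univ_nonempty
          (fun x => -Real.logb 2 (Q x) + Real.logb 2 (P (θhat x) x))) := by
  set C := ∑ y, P (θhat y) y
  have hC : 0 < C := sum_pos (fun x _ => hpos x) univ_nonempty
  refine ⟨fun x => neg_logb_div_add_logb (hpos x).ne' hC.ne', fun Q hQpos hQsum hQne => ?_⟩
  have hnml_sum : ∑ x, P (θhat x) x / C = 1 := by rw [← sum_div, div_self hC.ne']
  obtain ⟨z, hz⟩ := Fintype.exists_lt_of_sum_eq_of_ne (hQsum.trans hnml_sum.symm) hQne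
  exact (logb_lt_neg_logb_add_logb_of_lt_div one_lt_two (hQpos z) hC hz).trans_le
    (le_sup' (fun x => -logb 2 (Q x) + logb 2 (P (θhat x) x)) (mem_univ z))

/-- (NML achieves constant regret and uniquely minimizes worst-case regret.) Let
`{P_θ : θ ∈ Θ}` be a family of distributions on a finite set, `θ̂ x` a maximizer of
`θ ↦ P_θ(x)` for each `x` (with positive maximal likelihood), and
`C = ∑_x P_{θ̂(x)}(x) > 0`. Then the normalized maximum likelihood distribution
`P_nml(x) = P_{θ̂(x)}(x)/C` has regret exactly `log₂ C` at every `x`, and every other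
(everywhere positive) probability distribution `Q` has worst-case regret
strictly larger than `log₂ C`. -/
theorem nml_minimax_regret (Θ : Type*) (X : Type*) [Fintype X] [Nonempty X]
    (P : Θ → X → ℝ) (θhat : X → Θ)
    (hml : ∀ (x : X) (θ : Θ), P θ x ≤ P (θhat x) x)
    (hpos : ∀ x : X, 0 < P (θhat x) x) :
    (∀ x : X,
      -Real.logb 2 (P (θhat x) x / ∑ y, P (θhat y) y) + Real.logb 2 (P (θhat x) x)
        = Real.logb 2 (∑ y, P (θhat y) y)) ∧
    (∀ Q : X → ℝ, (∀ x, 0 < Q x) → (∑ x, Q x = 1) →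
      Q ≠ (fun x => P (θhat x) x / ∑ y, P (θhat y) y) →
      Real.logb 2 (∑ y, P (θhat y) y) <
        Finset.univ.sup' Finset.univ_nonempty
          (fun x => -Real.logb 2 (Q x) + Real.logb 2 (P (θhat x) x))) :=
  nml_minimax_regret_general Θ X P θhat hpos
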